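/- arXiv:2501.12198 — 2 statements merged into one kernel-verified Lean document; each statement's English description precedes it below -/
import Mathlib

section
/- Let K and N be positive integers, f₀, x₀, λ ∈ ℝ, f(t) = f₀ + λ·t, and let x : ℕ → ℝ satisfy x(0) = x₀ and x(t+1) = (K·f(t) + N·x(t))/(K+N) for all t ∈ ℕ. Then the sequence f(t) − x(t) converges, as t → ∞, to λ·(K+N)/K. -/
/-! The gap `g t = f t - x t` obeys the affine recursion `g (t + 1) = r * g t + λ` with contraction
factor `r = N / (K + N) ∈ [0, 1)`, so it converges to the fixed point `λ / (1 - r) = λ (K + N) / K`. -/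

open Filter Topology

theorem tendsto_of_affine_recurrence {r a : ℝ} (hr : |r| < 1) {u : ℕ → ℝ}
    (hu : ∀ t, u (t + 1) = r * u t + a) : Tendsto u atTop (𝓝 (a / (1 - r))) := by
  have hfix : r * (a / (1 - r)) + a = a / (1 - r) := by
    have : 1 - r ≠ 0 := by linarith [le_abs_self r]
    field_simp; ring
  set c := a / (1 - r)
  have hdev : ∀ t, u t - c = r ^ t * (u 0 - c) := by
    intro t
    induction t with
    | zero => simp
    | succ t ih => rw [hu, pow_succ, mul_right_comm, ← ih]; linear_combination hfix
  have hlim : Tendsto (fun t => r ^ t * (u 0 - c) + c) atTop (𝓝 (0 * (u 0 - c) + c)) :=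
    ((tendsto_pow_atTop_nhds_zero_of_abs_lt_one hr).mul_const _).add_const _
  rw [zero_mul, zero_add] at hlim
  exact hlim.congr fun t => by rw [← hdev]; ring

theorem gap_succ_of_weighted_average {K N l : ℝ} (hKN : K + N ≠ 0) {f x : ℕ → ℝ}
    (hf : ∀ t, f (t + 1) = f t + l) (hx : ∀ t, x (t + 1) = (K * f t + N * x t) / (K + N))
    (t : ℕ) : f (t + 1) - x (t + 1) = N / (K + N) * (f t - x t) + l := by
  rw [hf, hx]
  field_simp
  ring

theorem hk_gap_limit_general
    (K N : ℕ) (hK : 0 < K)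
    (f₀ l : ℝ) (f : ℕ → ℝ) (hf : ∀ t : ℕ, f t = f₀ + l * (t : ℝ))
    (x : ℕ → ℝ)
    (hx : ∀ t : ℕ, x (t + 1) = ((K : ℝ) * f t + (N : ℝ) * x t) / ((K : ℝ) + (N : ℝ))) :
    Filter.Tendsto (fun t : ℕ => f t - x t) Filter.atTop
      (nhds (l * ((K : ℝ) + (N : ℝ)) / (K : ℝ))) := by
  have hKpos : (0 : ℝ) < K := by exact_mod_cast hK
  have hKN : (0 : ℝ) < K + N := by positivity
  have hr : |(N : ℝ) / (K + N)| < 1 := by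
    rw [abs_of_nonneg (by positivity), div_lt_one hKN]
    linarith
  have hstep : ∀ t, f (t + 1) = f t + l := fun t => by rw [hf, hf]; push_cast; ring
  have hlim := tendsto_of_affine_recurrence (u := fun t => f t - x t) hr
    (gap_succ_of_weighted_average hKN.ne' hstep hx)
  rwa [one_sub_div hKN.ne', add_sub_cancel_right, div_div_eq_mul_div] at hlim

theorem hk_gap_limit
    (K N : ℕ) (hK : 0 < K) (hN : 0 < N)
    (f₀ x₀ l : ℝ) (f : ℕ → ℝ) (hf : ∀ t : ℕ, f t = f₀ + l * (t : ℝ))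
    (x : ℕ → ℝ) (hx0 : x 0 = x₀)
    (hx : ∀ t : ℕ, x (t + 1) = ((K : ℝ) * f t + (N : ℝ) * x t) / ((K : ℝ) + (N : ℝ))) :
    Filter.Tendsto (fun t : ℕ => f t - x t) Filter.atTop
      (nhds (l * ((K : ℝ) + (N : ℝ)) / (K : ℝ))) :=
  hk_gap_limit_general K N hK f₀ l f hf x hx
end

section
/- Let K and N be positive integers, f₀, x₀, λ ∈ ℝ, f(t) = f₀ + λ·t, and let x : ℕ → ℝ satisfy x(0) = x₀ and x(t+1) = (K·f(t) + N·x(t))/(K+N) for all t ∈ ℕ. Then for every t ∈ ℕ, the gap f(t) − x(t) is a convex combination of f₀ − x₀ and λ·(K+N)/K; in particular min(f₀ − x₀, λ·(K+N)/K) ≤ f(t) − x(t) ≤ max(f₀ − x₀, λ·(K+N)/K). -/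
/-!
The gap `g t = f t - x t` obeys the affine recursion `g (t + 1) = r * g t + (1 - r) * p` with
contraction factor `r = N / (K + N) ∈ [0, 1]` and fixed point `p = l * (K + N) / K`. Hence
`g t = r ^ t * g 0 + (1 - r ^ t) * p`, a point of the segment from `g 0 = f₀ - x₀` to `p`.
-/

theorem affine_recurrence_eq {R : Type*} [CommRing R] {g : ℕ → R} {r p : R}
    (h : ∀ t, g (t + 1) = r * g t + (1 - r) * p) (t : ℕ) :
    g t = r ^ t * g 0 + (1 - r ^ t) * p := by
  induction t with
  | zero => simp
  | succ t ih => rw [h, ih]; ring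

theorem mem_segment_of_affine_recurrence {g : ℕ → ℝ} {r p : ℝ} (hr₀ : 0 ≤ r) (hr₁ : r ≤ 1)
    (h : ∀ t, g (t + 1) = r * g t + (1 - r) * p) (t : ℕ) : g t ∈ segment ℝ (g 0) p :=
  ⟨r ^ t, 1 - r ^ t, pow_nonneg hr₀ t, sub_nonneg.2 (pow_le_one₀ hr₀ hr₁), add_sub_cancel _ _,
    (affine_recurrence_eq h t).symm⟩

theorem hk_gap_succ (K N : ℕ) (hK : 0 < K) (f₀ l : ℝ) (f : ℕ → ℝ)
    (hf : ∀ t : ℕ, f t = f₀ + l * (t : ℝ)) (x : ℕ → ℝ)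
    (hx : ∀ t : ℕ, x (t + 1) = ((K : ℝ) * f t + (N : ℝ) * x t) / ((K : ℝ) + (N : ℝ))) (t : ℕ) :
    f (t + 1) - x (t + 1) =
      N / (K + N) * (f t - x t) + (1 - N / (K + N)) * (l * (K + N) / K) := by
  have hK' : (0 : ℝ) < K := by exact_mod_cast hK
  have hKN : (0 : ℝ) < K + N := by positivity
  rw [hx, hf, hf]
  field_simp
  push_cast
  ring

theorem hk_gap_convex_combination_general
    (K N : ℕ) (hK : 0 < K)
    (f₀ x₀ l : ℝ) (f : ℕ → ℝ) (hf : ∀ t : ℕ, f t = f₀ + l * (t : ℝ))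
    (x : ℕ → ℝ) (hx0 : x 0 = x₀)
    (hx : ∀ t : ℕ, x (t + 1) = ((K : ℝ) * f t + (N : ℝ) * x t) / ((K : ℝ) + (N : ℝ))) :
    ∀ t : ℕ,
      (∃ a b : ℝ, 0 ≤ a ∧ 0 ≤ b ∧ a + b = 1 ∧
        f t - x t = a * (f₀ - x₀) + b * (l * ((K : ℝ) + (N : ℝ)) / (K : ℝ))) ∧
      min (f₀ - x₀) (l * ((K : ℝ) + (N : ℝ)) / (K : ℝ)) ≤ f t - x t ∧
      f t - x t ≤ max (f₀ - x₀) (l * ((K : ℝ) + (N : ℝ)) / (K : ℝ)) := by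
  intro t
  have hr₁ : (N : ℝ) / (K + N) ≤ 1 := div_le_one_of_le₀ (by simp) (by positivity)
  have hgap₀ : f 0 - x 0 = f₀ - x₀ := by simp [hf, hx0]
  have hseg : f t - x t ∈ segment ℝ (f₀ - x₀) (l * (K + N) / K) :=
    hgap₀ ▸ mem_segment_of_affine_recurrence (g := fun t ↦ f t - x t) (by positivity) hr₁
      (hk_gap_succ K N hK f₀ l f hf x hx) t
  have hI := segment_subset_uIcc _ _ hseg
  obtain ⟨a, b, ha, hb, hab, hcomb⟩ := hseg
  exact ⟨⟨a, b, ha, hb, hab, by simpa [smul_eq_mul] using hcomb.symm⟩, hI.1, hI.2⟩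

theorem hk_gap_convex_combination
    (K N : ℕ) (hK : 0 < K) (hN : 0 < N)
    (f₀ x₀ l : ℝ) (f : ℕ → ℝ) (hf : ∀ t : ℕ, f t = f₀ + l * (t : ℝ))
    (x : ℕ → ℝ) (hx0 : x 0 = x₀)
    (hx : ∀ t : ℕ, x (t + 1) = ((K : ℝ) * f t + (N : ℝ) * x t) / ((K : ℝ) + (N : ℝ))) :
    ∀ t : ℕ,
      (∃ a b : ℝ, 0 ≤ a ∧ 0 ≤ b ∧ a + b = 1 ∧
        f t - x t = a * (f₀ - x₀) + b * (l * ((K : ℝ) + (N : ℝ)) / (K : ℝ))) ∧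
      min (f₀ - x₀) (l * ((K : ℝ) + (N : ℝ)) / (K : ℝ)) ≤ f t - x t ∧
      f t - x t ≤ max (f₀ - x₀) (l * ((K : ℝ) + (N : ℝ)) / (K : ℝ)) :=
  hk_gap_convex_combination_general K N hK f₀ x₀ l f hf x hx0 hx
end
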